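/- arXiv:1904.09063 — 2 statements merged into one kernel-verified Lean document; each statement's English description precedes it below -/
import Mathlib

section
/- Suppose t, A, x, y, z are real numbers with A, x, y, z ∉ {0, 1, -1}, t ≠ 0, and √(t(1 - 1/A²)(1 - 1/x²)(1 - 1/y²)(1 - 1/z²)) = (1 + 1/x)(1 + 1/y)(1 + 1/z). Then there exists a nonzero real k such that, setting γ = ((A²-1)t - A²)kz - ((A²-1)t + A²)k and β = ((A²-1)t + A²)kz - ((A²-1)t - A²)k - 1, the numbers x and y are the two roots of X² - γX + β = 0, i.e., x + y = γ and xy = β; moreover γ² - 4β ≥ 0, β ≠ 0, and 1 - γ + β ≠ 0. -/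
/-!
Squaring the hypothesis and clearing denominators gives
`(A² - 1) t (x - 1)(y - 1)(z - 1) = A² (x + 1)(y + 1)(z + 1)`. With `a = (A² - 1) t - A²` and
`b = (A² - 1) t + A²` this reads `(x y + 1)(a z - b) = (x + y)(b z - a)`, so the nonzero vectors
`(x + y, x y + 1)` and `(a z - b, b z - a)` are proportional: `x + y = k (a z - b) = γ` and
`x y + 1 = k (b z - a) = β + 1`. Then `γ² - 4β = (x - y)²`, `β = x y` and `1 - γ + β = (1 - x)(1 - y)`.
-/

theorem exists_ne_zero_eq_mul_of_mul_eq_mul {K : Type*} [Field K] {p q r s : K}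
    (h : p * s = q * r) (hpq : p ≠ 0 ∨ q ≠ 0) (hrs : r ≠ 0 ∨ s ≠ 0) :
    ∃ k ≠ 0, p = k * r ∧ q = k * s := by
  rcases hrs with hr | hs
  · refine ⟨p / r, div_ne_zero ?_ hr, by field_simp, by field_simp; linear_combination -h⟩
    rintro rfl
    exact hpq.elim (· rfl) fun hq => mul_ne_zero hq hr (by simpa using h.symm)
  · refine ⟨q / s, div_ne_zero ?_ hs, by field_simp; linear_combination h, by field_simp⟩
    rintro rfl
    exact hpq.elim (fun hp => mul_ne_zero hp hs (by simpa using h)) (· rfl)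

theorem Real.eq_sq_of_sqrt_eq {s r : ℝ} (h : √s = r) (hr : r ≠ 0) : s = r ^ 2 := by
  have hs : 0 < s := Real.sqrt_ne_zero'.mp (h ▸ hr)
  rw [← h, Real.sq_sqrt hs.le]

theorem mul_prod_sub_one_eq_of_sqrt_eq {t A x y z : ℝ} (hA : A ≠ 0)
    (hx : x ≠ 0) (hy : y ≠ 0) (hz : z ≠ 0) (hx' : x + 1 ≠ 0) (hy' : y + 1 ≠ 0) (hz' : z + 1 ≠ 0)
    (h : √(t * (1 - 1/A^2) * (1 - 1/x^2) * (1 - 1/y^2) * (1 - 1/z^2)) =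
      (1 + 1/x) * (1 + 1/y) * (1 + 1/z)) :
    (A^2 - 1) * t * (x - 1) * (y - 1) * (z - 1) = A^2 * (x + 1) * (y + 1) * (z + 1) := by
  have hr : (1 + 1/x) * (1 + 1/y) * (1 + 1/z) ≠ 0 := by
    field_simp
    simp [hx, hy, hz, hx', hy', hz']
  have hsq := Real.eq_sq_of_sqrt_eq h hr
  field_simp at hsq
  apply mul_left_cancel₀ (mul_ne_zero (pow_ne_zero 2 (mul_ne_zero (mul_ne_zero hx hy) hz))
    (mul_ne_zero (mul_ne_zero hx' hy') hz'))
  linear_combination (x * y * z) ^ 2 * hsq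

theorem vieta_conditions {x y : ℝ} (hx : x ≠ 0) (hy : y ≠ 0) (hx1 : x ≠ 1) (hy1 : y ≠ 1) :
    (x + y) ^ 2 - 4 * (x * y) ≥ 0 ∧ x * y ≠ 0 ∧ 1 - (x + y) + x * y ≠ 0 := by
  refine ⟨by nlinarith [sq_nonneg (x - y)], mul_ne_zero hx hy, ?_⟩
  rw [show 1 - (x + y) + x * y = (x - 1) * (y - 1) by ring]
  exact mul_ne_zero (sub_ne_zero.mpr hx1) (sub_ne_zero.mpr hy1)

theorem stmt_3_general (t A x y z : ℝ)
    (hA : A ≠ 0 ∧ A ≠ 1 ∧ A ≠ -1) (hx : x ≠ 0 ∧ x ≠ 1 ∧ x ≠ -1)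
    (hy : y ≠ 0 ∧ y ≠ 1 ∧ y ≠ -1) (hz : z ≠ 0 ∧ z ≠ 1 ∧ z ≠ -1)
    (heq : Real.sqrt (t * (1 - 1/A^2) * (1 - 1/x^2) * (1 - 1/y^2) * (1 - 1/z^2)) =
      (1 + 1/x) * (1 + 1/y) * (1 + 1/z)) :
    ∃ k : ℝ, k ≠ 0 ∧
      (let γ := ((A^2-1)*t - A^2)*k*z - ((A^2-1)*t + A^2)*k
       let β := ((A^2-1)*t + A^2)*k*z - ((A^2-1)*t - A^2)*k - 1
       x + y = γ ∧ x * y = β ∧ γ^2 - 4*β ≥ 0 ∧ β ≠ 0 ∧ 1 - γ + β ≠ 0) := by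
  obtain ⟨hx0, hx1, hx1'⟩ := hx
  obtain ⟨hy0, hy1, hy1'⟩ := hy
  have hx' : x + 1 ≠ 0 := fun h => hx1' (by linarith)
  have hy' : y + 1 ≠ 0 := fun h => hy1' (by linarith)
  have hz' : z + 1 ≠ 0 := fun h => hz.2.2 (by linarith)
  have key := mul_prod_sub_one_eq_of_sqrt_eq hA.1 hx0 hy0 hz.1 hx' hy' hz' heq
  set a := (A^2 - 1) * t - A^2
  set b := (A^2 - 1) * t + A^2
  have hcross : (x + y) * (b * z - a) = (x * y + 1) * (a * z - b) := by
    linear_combination -key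
  have hxy : x + y ≠ 0 ∨ x * y + 1 ≠ 0 := by
    by_contra! h
    have : (x - 1) * (x + 1) = 0 := by linear_combination x * h.1 - h.2
    exact mul_ne_zero (sub_ne_zero.mpr hx1) hx' this
  have hab : a * z - b ≠ 0 ∨ b * z - a ≠ 0 := by
    by_contra! h
    have : A^2 * (z + 1) = 0 := by linear_combination (h.2 - h.1) / 2
    exact mul_ne_zero (pow_ne_zero 2 hA.1) hz' this
  obtain ⟨k, hk, hsum, hprod⟩ := exists_ne_zero_eq_mul_of_mul_eq_mul hcross hxy hab
  refine ⟨k, hk, ?_⟩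
  have hγ : a * k * z - b * k = x + y := by rw [hsum]; ring
  have hβ : b * k * z - a * k - 1 = x * y := by linear_combination -hprod
  dsimp only
  rw [hγ, hβ]
  exact ⟨rfl, rfl, vieta_conditions hx0 hy0 hx1 hy1⟩

theorem stmt_3 (t A x y z : ℝ)
    (hA : A ≠ 0 ∧ A ≠ 1 ∧ A ≠ -1) (hx : x ≠ 0 ∧ x ≠ 1 ∧ x ≠ -1)
    (hy : y ≠ 0 ∧ y ≠ 1 ∧ y ≠ -1) (hz : z ≠ 0 ∧ z ≠ 1 ∧ z ≠ -1)
    (ht : t ≠ 0)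
    (heq : Real.sqrt (t * (1 - 1/A^2) * (1 - 1/x^2) * (1 - 1/y^2) * (1 - 1/z^2)) =
      (1 + 1/x) * (1 + 1/y) * (1 + 1/z)) :
    ∃ k : ℝ, k ≠ 0 ∧
      (let γ := ((A^2-1)*t - A^2)*k*z - ((A^2-1)*t + A^2)*k
       let β := ((A^2-1)*t + A^2)*k*z - ((A^2-1)*t - A^2)*k - 1
       x + y = γ ∧ x * y = β ∧ γ^2 - 4*β ≥ 0 ∧ β ≠ 0 ∧ 1 - γ + β ≠ 0) :=
  stmt_3_general t A x y z hA hx hy hz heq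
end

section
/- There are infinitely many tuples (t, A, x, y, z) of integers, none of A, x, y, z equal to 0, 1, or -1 and t ≠ 0, satisfying t(1 - 1/A²)(1 - 1/x²)(1 - 1/y²)(1 - 1/z²) = ((1 + 1/x)(1 + 1/y)(1 + 1/z))². -/
private lemma aux_eq (m : ℚ) (h : m ≠ 0) :
    (2:ℚ) * (1 - 1/(2:ℚ)^2) * (1 - 1/m^2) * (1 - 1/(-m)^2) * (1 - 1/(5:ℚ)^2) =
    ((1 + 1/m) * (1 + 1/(-m)) * (1 + 1/(5:ℚ)))^2 := by
  rw [neg_sq, div_neg]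
  field_simp
  ring

theorem stmt_7 :
    {p : ℤ × ℤ × ℤ × ℤ × ℤ |
      p.1 ≠ 0 ∧
      (p.2.1 ≠ 0 ∧ p.2.1 ≠ 1 ∧ p.2.1 ≠ -1) ∧
      (p.2.2.1 ≠ 0 ∧ p.2.2.1 ≠ 1 ∧ p.2.2.1 ≠ -1) ∧
      (p.2.2.2.1 ≠ 0 ∧ p.2.2.2.1 ≠ 1 ∧ p.2.2.2.1 ≠ -1) ∧
      (p.2.2.2.2 ≠ 0 ∧ p.2.2.2.2 ≠ 1 ∧ p.2.2.2.2 ≠ -1) ∧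
      (p.1 : ℚ) * (1 - 1/(p.2.1:ℚ)^2) * (1 - 1/(p.2.2.1:ℚ)^2) *
        (1 - 1/(p.2.2.2.1:ℚ)^2) * (1 - 1/(p.2.2.2.2:ℚ)^2) =
      ((1 + 1/(p.2.2.1:ℚ)) * (1 + 1/(p.2.2.2.1:ℚ)) * (1 + 1/(p.2.2.2.2:ℚ)))^2
    }.Infinite := by
  apply Set.infinite_of_injective_forall_mem
    (f := fun n : ℕ => ((2 : ℤ), (2 : ℤ), ((n : ℤ) + 2), (-((n : ℤ) + 2)), (5 : ℤ)))
  · intro a b hab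
    simp only [Prod.mk.injEq] at hab
    exact_mod_cast add_right_cancel hab.2.2.1
  · intro n
    simp only [Set.mem_setOf_eq]
    have h0 : ((n : ℤ) + 2) ≠ 0 := by omega
    have hq : ((n : ℚ) + 2) ≠ 0 := by positivity
    have hq2 : (-2 - (n : ℚ)) ≠ 0 := by intro h; apply hq; linarith
    refine ⟨by norm_num, ⟨by norm_num, by norm_num, by norm_num⟩,
      ⟨h0, by omega, by omega⟩, ⟨by omega, by omega, by omega⟩,
      ⟨by norm_num, by norm_num, by norm_num⟩, ?_⟩
    push_cast
    exact aux_eq _ hq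
end
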